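/- arXiv:2308.09371 — 11 statements merged into one kernel-verified Lean document; each statement's English description precedes it below -/
import Mathlib

section
/- Let A be a commutative ring, n ≥ 1, and F an n×n matrix over A with F² = F. Define r_0, …, r_n ∈ A by the polynomial identity det(I_n + X·F) = Σ_{i=0}^n r_i (1+X)^i in A[X]. Then (r_0, r_1, …, r_n) is a fundamental system of orthogonal idempotents of A: r_0 + r_1 + ⋯ + r_n = 1 and r_i r_j = 0 whenever i ≠ j (in particular each r_i is idempotent). -/
/-!
Put `Q(y) = ∑ rᵢ yⁱ`, so that `Q(y) = det (1 + (y - 1) F)` in every commutative `A`-algebra.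
Since `F² = F`, `(1 + a F) (1 + b F) = 1 + (a + b + a b) F`, and for `a = y - 1`, `b = z - 1`
this makes `Q` multiplicative: `Q(y) Q(z) = Q(y z)`. Comparing the coefficients of `yⁱ zʲ` in
`A[y, z]` gives `rᵢ rⱼ = δᵢⱼ rᵢ`, and `Q(1) = det 1 = 1` gives `∑ rᵢ = 1`.
-/

open Polynomial Matrix Finset

theorem IsIdempotentElem.one_add_smul_mul_one_add_smul {B R : Type*} [CommSemiring B]
    [Semiring R] [Algebra B R] {e : R} (he : IsIdempotentElem e) (a b : B) :
    (1 + a • e) * (1 + b • e) = 1 + (a + b + a * b) • e := by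
  rw [mul_add, add_mul, add_mul, smul_mul_smul_comm, he.eq]
  simp only [one_mul, mul_one, add_smul]
  abel

theorem Matrix.det_one_add_sub_one_smul_mul_det {B ι : Type*} [CommRing B] [Fintype ι]
    [DecidableEq ι] {M : Matrix ι ι B} (hM : IsIdempotentElem M) (y z : B) :
    det (1 + (y - 1) • M) * det (1 + (z - 1) • M) = det (1 + (y * z - 1) • M) := by
  rw [← det_mul, hM.one_add_smul_mul_one_add_smul]
  ring_nf

theorem Polynomial.eval₂_det_one_add_X_smul {A B ι : Type*} [CommRing A] [CommRing B]
    [Fintype ι] [DecidableEq ι] (f : A →+* B) (z : B) (F : Matrix ι ι A) :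
    eval₂ f z (1 + (X : A[X]) • F.map C).det = (1 + z • F.map f).det := by
  rw [← coe_eval₂RingHom, RingHom.map_det]
  congr 1
  ext i j
  simp [one_apply, apply_ite (eval₂ f z)]
  ring

theorem Polynomial.eval₂_eq_det_of_det_one_add_X_smul_eq_comp {A B ι : Type*} [CommRing A]
    [CommRing B] [Fintype ι] [DecidableEq ι] {F : Matrix ι ι A} {p : A[X]}
    (hp : (1 + (X : A[X]) • F.map C).det = p.comp (1 + X)) (f : A →+* B) (y : B) :
    p.eval₂ f y = (1 + (y - 1) • F.map f).det := by
  have h := congrArg (eval₂ f (y - 1)) hp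
  rw [eval₂_det_one_add_X_smul, eval₂_comp] at h
  simpa using h.symm

theorem Polynomial.coeff_eval₂_C_X_mul_X {R : Type*} [CommSemiring R] (p : R[X]) (j : ℕ) :
    (p.eval₂ ((C : R[X] →+* R[X][X]).comp C) (C X * X)).coeff j = monomial j (p.coeff j) := by
  have hterm (k : ℕ) :
      C (C (p.coeff k)) * (C X * X) ^ k = C (monomial k (p.coeff k)) * X ^ k := by
    rw [mul_pow, ← C_pow, ← mul_assoc, ← C_mul, ← C_mul_X_pow_eq_monomial]
  simp only [eval₂_eq_sum, Polynomial.sum, RingHom.comp_apply, hterm, finsetSum_coeff,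
    coeff_C_mul_X_pow]
  rw [Finset.sum_ite_eq]
  split_ifs with h
  · rfl
  · simp [notMem_support_iff.mp h]

/-- `C X` and `X` are independent variables `y`, `z` of `R[X][X]`, so the hypothesis reads
`p(y) p(z) = p(y z)`. -/
theorem Polynomial.coeff_mul_coeff_of_eval₂_mul {R : Type*} [CommSemiring R] {p : R[X]}
    (hp : p.eval₂ ((C : R[X] →+* R[X][X]).comp C) (C X) * p.eval₂ (C.comp C) X
      = p.eval₂ (C.comp C) (C X * X)) (i j : ℕ) :
    p.coeff i * p.coeff j = if i = j then p.coeff i else 0 := by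
  have h := congrArg (fun q : R[X][X] => (q.coeff j).coeff i) hp
  rw [← hom_eval₂, eval₂_C_X, show p.eval₂ (C.comp C) X = p.map C from rfl] at h
  simp only [coeff_C_mul, coeff_map, coeff_mul_C, coeff_eval₂_C_X_mul_X, coeff_monomial] at h
  rw [h]
  rcases eq_or_ne i j with rfl | hij
  · simp
  · simp [hij, hij.symm]

theorem fundamental_system_of_orthogonal_idempotents_of_idempotent_matrix_general
    {A : Type*} [CommRing A] {n : ℕ}
    (F : Matrix (Fin n) (Fin n) A) (hF : F * F = F)
    (r : Fin (n + 1) → A)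
    (hr : (1 + (Polynomial.X : A[X]) • F.map Polynomial.C).det
        = ∑ i : Fin (n + 1), Polynomial.C (r i) * (1 + Polynomial.X) ^ (i : ℕ)) :
    (∑ i : Fin (n + 1), r i) = 1 ∧
      ∀ i j : Fin (n + 1), i ≠ j → r i * r j = 0 := by
  set Q : A[X] := ∑ i : Fin (n + 1), C (r i) * X ^ (i : ℕ)
  have hQ : (1 + (X : A[X]) • F.map C).det = Q.comp (1 + X) := by
    simp [Q, hr, Polynomial.sum_comp]
  refine ⟨?_, fun i j hij => ?_⟩
  · simpa [Q, eval₂_finsetSum] using eval₂_eq_det_of_det_one_add_X_smul_eq_comp hQ (.id A) 1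
  · set f : A →+* A[X][X] := C.comp C
    have hmul := det_one_add_sub_one_smul_mul_det (IsIdempotentElem.map hF f.mapMatrix) (C X) X
    simp only [RingHom.mapMatrix_apply, ← eval₂_eq_det_of_det_one_add_X_smul_eq_comp hQ] at hmul
    have hcoeff (k : Fin (n + 1)) : Q.coeff k = r k := by simp [Q, Fin.val_eq_val]
    simpa [hcoeff, Fin.val_eq_val, hij] using Q.coeff_mul_coeff_of_eval₂_mul hmul i j

/-- **Theorem 3 (first part).** For an idempotent `n × n` matrix `F` over a commutative
ring `A`, the coefficients `r 0, …, r n` defined by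
`det(I + X • F) = ∑ i, r i • (1 + X) ^ i` form a fundamental system of orthogonal
idempotents: they sum to `1` and pairwise products vanish. -/
theorem fundamental_system_of_orthogonal_idempotents_of_idempotent_matrix
    {A : Type*} [CommRing A] {n : ℕ} (hn : 1 ≤ n)
    (F : Matrix (Fin n) (Fin n) A) (hF : F * F = F)
    (r : Fin (n + 1) → A)
    (hr : (1 + (Polynomial.X : A[X]) • F.map Polynomial.C).det
        = ∑ i : Fin (n + 1), Polynomial.C (r i) * (1 + Polynomial.X) ^ (i : ℕ)) :
    (∑ i : Fin (n + 1), r i) = 1 ∧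
      ∀ i j : Fin (n + 1), i ≠ j → r i * r j = 0 :=
  fundamental_system_of_orthogonal_idempotents_of_idempotent_matrix_general F hF r hr
end

section
/- Let A be a commutative ring, F an n×n matrix over A with F² = F, and r_0, …, r_n ∈ A defined by det(I_n + X·F) = Σ_{i=0}^n r_i (1+X)^i in A[X]. Then for every k with 0 ≤ k ≤ n and every choice of k+1 row indices and k+1 column indices, the corresponding (k+1)×(k+1) minor of F, multiplied by r_k, is zero; equivalently, all (k+1)×(k+1) minors of the matrix r_k·F vanish. -/
/-!
For `s ⊆ Fin n` let `K_s` be the matrix whose rows indexed by `s` are those of `F` and whose other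
rows are those of `1 - F`. The determinant is additive in each row, so
`∑ₛ det K_s = det (F + (1 - F)) = 1`.

Since `F² = F`, multiplying `K_s` on the right by `1 + X F` scales the rows in `s` by `1 + X` and
fixes the others, so `det K_s · det (1 + X F) = (1 + X) ^ |s| · det K_s`; comparing coefficients
in the basis `(1 + X) ^ i` gives `det K_s · r_i = 0` for `i ≠ |s|`. On the other hand `K_s F` has
its rows outside `s` equal to zero, so `det K_s • F = adj K_s · K_s F` factors through `A ^ |s|`
and all its minors of size `> |s|` vanish.

Hence `(det K_s) ^ (k + 1) · r_k · minor = 0` for every `s`, and as the `det K_s` generate the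
unit ideal, `r_k · minor = 0`.
-/

open Polynomial Matrix Finset

namespace Matrix

section piecewiseRows

variable {m n α : Type*} [DecidableEq m] (s : Finset m)

def piecewiseRows (M N : Matrix m n α) : Matrix m n α :=
  of fun i j => if i ∈ s then M i j else N i j

@[simp]
theorem piecewiseRows_apply_of_mem {M N : Matrix m n α} {i : m} (hi : i ∈ s) (j : n) :
    piecewiseRows s M N i j = M i j := by
  simp [piecewiseRows, hi]

@[simp]
theorem piecewiseRows_apply_of_notMem {M N : Matrix m n α} {i : m} (hi : i ∉ s) (j : n) :
    piecewiseRows s M N i j = N i j := by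
  simp [piecewiseRows, hi]

theorem map_piecewiseRows {β : Type*} (f : α → β) (M N : Matrix m n α) :
    (piecewiseRows s M N).map f = piecewiseRows s (M.map f) (N.map f) := by
  ext i j
  by_cases hi : i ∈ s <;> simp [hi]

theorem piecewiseRows_mul {l : Type*} [Fintype n] [NonUnitalNonAssocSemiring α]
    (M N : Matrix m n α) (P : Matrix n l α) :
    piecewiseRows s M N * P = piecewiseRows s (M * P) (N * P) := by
  ext i j
  by_cases hi : i ∈ s <;> simp [mul_apply, hi]

end piecewiseRows

variable {R : Type*} [CommRing R]

theorem det_mul_eq_zero_of_card_lt {ι κ : Type*} [Fintype ι] [DecidableEq ι] [Fintype κ]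
    (h : Fintype.card κ < Fintype.card ι) (P : Matrix ι κ R) (Q : Matrix κ ι R) :
    (P * Q).det = 0 := by
  let τ := Fin (Fintype.card ι - Fintype.card κ)
  let e : κ ⊕ τ ≃ ι := Fintype.equivOfCardEq (by simp [τ]; omega)
  have hPQ : P * Q
      = (fromCols P 0).submatrix id e.symm * (fromRows Q 0).submatrix e.symm id := by
    rw [← submatrix_mul _ _ _ _ _ e.symm.bijective, fromCols_mul_fromRows]
    simp
  rw [hPQ, det_mul, det_eq_zero_of_column_eq_zero (e (.inr ⟨0, by omega⟩)) (by simp), zero_mul]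

variable {m : Type*} [Fintype m] [DecidableEq m] (s : Finset m)

theorem det_submatrix_mul_eq_zero_of_card_lt {l n ι : Type*} [Fintype ι] [DecidableEq ι]
    (L : Matrix l m R) (M : Matrix m n R) (hM : ∀ i ∉ s, M i = 0) {ri : ι → l} {ci : ι → n}
    (h : s.card < Fintype.card ι) : ((L * M).submatrix ri ci).det = 0 := by
  have hM' : M = (1 : Matrix m m R).submatrix id (Subtype.val : s → m) *
      M.submatrix (Subtype.val : s → m) id := by
    ext i j
    rw [mul_apply]
    simp only [submatrix_apply, id, one_apply, ite_mul, one_mul, zero_mul]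
    rw [Finset.sum_coe_sort s (fun t => if i = t then M t j else 0), Finset.sum_ite_eq]
    split_ifs with hi
    · rfl
    · rw [hM i hi, Pi.zero_apply]
  rw [hM', ← Matrix.mul_assoc, submatrix_mul _ _ _ _ _ Function.bijective_id]
  exact det_mul_eq_zero_of_card_lt (by simpa using h) _ _

theorem det_add_eq_sum_det_piecewiseRows (M N : Matrix m m R) :
    (M + N).det = ∑ s : Finset m, (piecewiseRows s M N).det := by
  have h : ∀ s : Finset m, piecewiseRows s M N = s.piecewise (fun i => M i) (fun i => N i) := by
    intro s
    ext i j
    by_cases hi : i ∈ s <;> simp [hi]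
  simp_rw [h]
  exact (detRowAlternating : (m → R) [⋀^m]→ₗ[R] R).map_add_univ M N

theorem det_piecewiseRows_smul (c : R) (M N : Matrix m m R) :
    (piecewiseRows s (c • M) N).det = c ^ s.card * (piecewiseRows s M N).det := by
  have h : piecewiseRows s (c • M) N = s.piecewise (fun i => c • piecewiseRows s M N i)
      (fun i => piecewiseRows s M N i) := by
    ext i j
    by_cases hi : i ∈ s <;> simp [hi]
  rw [h]
  exact ((detRowAlternating : (m → R) [⋀^m]→ₗ[R] R).map_piecewise_smul _ _ s).trans (by
    simp only [prod_const, smul_eq_mul]; rfl)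

section Idempotent

variable {P : Matrix m m R} (hP : P * P = P)
include hP

theorem piecewiseRows_mul_one_add_smul_of_mul_self (c : R) :
    piecewiseRows s P (1 - P) * (1 + c • P) = piecewiseRows s ((1 + c) • P) (1 - P) := by
  rw [piecewiseRows_mul]
  congr 1
  · rw [mul_add, mul_one, mul_smul_comm, hP, add_smul, one_smul]
  · rw [mul_add, mul_one, mul_smul_comm, sub_mul, one_mul, hP, sub_self, smul_zero, add_zero]

theorem det_piecewiseRows_mul_det_one_add_smul_of_mul_self (c : R) :
    (piecewiseRows s P (1 - P)).det * (1 + c • P).det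
      = (1 + c) ^ s.card * (piecewiseRows s P (1 - P)).det := by
  rw [← det_mul, piecewiseRows_mul_one_add_smul_of_mul_self s hP, det_piecewiseRows_smul]

theorem det_piecewiseRows_pow_mul_det_submatrix_eq_zero {ι : Type*} [Fintype ι] [DecidableEq ι]
    (h : s.card < Fintype.card ι) (ri ci : ι → m) :
    (piecewiseRows s P (1 - P)).det ^ Fintype.card ι * (P.submatrix ri ci).det = 0 := by
  set K := piecewiseRows s P (1 - P)
  have hKP : K * P = piecewiseRows s P 0 := by
    rw [piecewiseRows_mul, hP, sub_mul, one_mul, hP, sub_self]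
  have hdet : K.det • P = K.adjugate * piecewiseRows s P 0 := by
    rw [← hKP, ← mul_assoc, adjugate_mul, smul_mul_assoc, one_mul]
  have := det_submatrix_mul_eq_zero_of_card_lt s K.adjugate (piecewiseRows s P 0)
    (fun i hi => funext fun j => by simp [hi]) (ri := ri) (ci := ci) h
  rwa [← hdet, submatrix_smul, Pi.smul_apply, Pi.smul_apply, det_smul] at this

end Idempotent

end Matrix

theorem Polynomial.eq_ite_of_sum_C_mul_one_add_X_pow_eq {R : Type*} [CommRing R] {N : ℕ}
    (a : Fin (N + 1) → R) (b : R) (d : ℕ)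
    (h : ∑ i : Fin (N + 1), C (a i) * (1 + X) ^ (i : ℕ) = C b * (1 + X) ^ d) (k : Fin (N + 1)) :
    a k = if (k : ℕ) = d then b else 0 := by
  have := congrArg (fun p => (taylor (-1) p).coeff k) h
  simpa [taylor_apply, finsetSum_coeff, coeff_X_pow, Fin.val_eq_val] using this

theorem eq_zero_of_sum_eq_one_of_pow_mul_eq_zero {R ι : Type*} [CommRing R] [Fintype ι]
    {e : ι → R} (he : ∑ i, e i = 1) (d : ℕ) {x : R} (h : ∀ i, e i ^ d * x = 0) : x = 0 := by
  have hone : (1 : R) ∈ (Ideal.torsionOf R R x).radical := by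
    rw [← he]
    exact Ideal.sum_mem _ fun i _ => ⟨d, (Ideal.mem_torsionOf_iff x _).2 (h i)⟩
  rwa [← Ideal.eq_top_iff_one, Ideal.radical_eq_top, Ideal.torsionOf_eq_top_iff] at hone

theorem det_piecewiseRows_mul_eq_ite {A m : Type*} [CommRing A] [Fintype m] [DecidableEq m]
    {F : Matrix m m A} (hF : F * F = F) {N : ℕ} {r : Fin (N + 1) → A}
    (hr : (1 + (X : A[X]) • F.map C).det = ∑ i : Fin (N + 1), C (r i) * (1 + X) ^ (i : ℕ))
    (s : Finset m) (k : Fin (N + 1)) :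
    (piecewiseRows s F (1 - F)).det * r k
      = if (k : ℕ) = s.card then (piecewiseRows s F (1 - F)).det else 0 := by
  set d := (piecewiseRows s F (1 - F)).det
  have hFC : F.map C * F.map C = F.map C := by rw [← Matrix.map_mul, hF]
  have hd : (piecewiseRows s (F.map C) (1 - F.map C)).det = C d := by
    rw [RingHom.map_det, RingHom.mapMatrix_apply, map_piecewiseRows, Matrix.map_sub _ (map_sub C),
      Matrix.map_one _ (map_zero C) (map_one C)]
  have key := det_piecewiseRows_mul_det_one_add_smul_of_mul_self s hFC (X : A[X])
  rw [hd, hr, mul_comm _ (C d), Finset.mul_sum] at key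
  refine eq_ite_of_sum_C_mul_one_add_X_pow_eq (fun i => d * r i) d s.card ?_ k
  simpa only [C_mul, mul_assoc] using key

/-- **Theorem 3 (second part).** For an idempotent `n × n` matrix `F` over a commutative
ring `A`, with `r 0, …, r n` defined by `det(I + X • F) = ∑ i, r i • (1 + X) ^ i`,
every `(k+1) × (k+1)` minor of `F` multiplied by `r k` vanishes. -/
theorem minors_mul_idempotent_eq_zero_of_idempotent_matrix
    {A : Type*} [CommRing A] {n : ℕ}
    (F : Matrix (Fin n) (Fin n) A) (hF : F * F = F)
    (r : Fin (n + 1) → A)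
    (hr : (1 + (Polynomial.X : A[X]) • F.map Polynomial.C).det
        = ∑ i : Fin (n + 1), Polynomial.C (r i) * (1 + Polynomial.X) ^ (i : ℕ)) :
    ∀ (k : Fin (n + 1)) (ri ci : Fin ((k : ℕ) + 1) → Fin n),
      Function.Injective ri → Function.Injective ci →
      r k * (F.submatrix ri ci).det = 0 := by
  intro k ri ci _ _
  have hsum : ∑ s, (piecewiseRows s F (1 - F)).det = 1 := by
    rw [← det_add_eq_sum_det_piecewiseRows, add_sub_cancel, det_one]
  refine eq_zero_of_sum_eq_one_of_pow_mul_eq_zero hsum (k + 1) fun s => ?_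
  by_cases hs : s.card = k
  · have hminor := det_piecewiseRows_pow_mul_det_submatrix_eq_zero s hF
      (by simp [hs]) ri ci
    rw [Fintype.card_fin] at hminor
    linear_combination r k * hminor
  · have hr_s := det_piecewiseRows_mul_eq_ite hF hr s k
    rw [if_neg (Ne.symm hs)] at hr_s
    linear_combination ((piecewiseRows s F (1 - F)).det ^ (k : ℕ) * (F.submatrix ri ci).det) * hr_s
end

section
/- Let A be a commutative ring, F an n×n matrix over A with F² = F, and r_0, …, r_n ∈ A defined by det(I_n + X·F) = Σ_{i=0}^n r_i (1+X)^i in A[X]. For each k with 0 ≤ k ≤ n, the sum over all k-element subsets I of {1, …, n} of r_k times the principal k×k minor of F with rows and columns indexed by I equals r_k; that is, r_k·σ_k(F) = r_k, where σ_k(F) denotes the sum of all principal k×k minors of F. -/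
/-!
Write `q = ∑ rᵢ Xⁱ`, so that `q(u) = det(1 + (u - 1) F)` for every `u` in any commutative
`A`-algebra. Since `F` is idempotent, `(1 + (u - 1) F)(1 + (v - 1) F) = 1 + (uv - 1) F`, hence
`q(uv) = q(u) q(v)`; comparing coefficients of the bivariate identity shows that the `rᵢ` are
orthogonal idempotents. On the other hand the `k`-th coefficient of `det(1 + X F)` is
`σ_k(F) = ∑ᵢ rᵢ (i choose k)`, and multiplying by `r_k` kills every term but `i = k`.
-/

open Polynomial Matrix Finset

theorem IsIdempotentElem.one_add_sub_one_smul_mul {R M : Type*} [CommRing R] [Ring M]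
    [Algebra R M] {G : M} (hG : IsIdempotentElem G) (u v : R) :
    (1 + (u - 1) • G) * (1 + (v - 1) • G) = 1 + (u * v - 1) • G := by
  simp only [mul_add, add_mul, one_mul, mul_one, smul_mul_smul, hG.eq]
  module

theorem Polynomial.coeff_mul_coeff_of_aeval_mul {A : Type*} [CommRing A] (q : A[X])
    (hq : aeval (C X * X : A[X][X]) q = aeval (C X) q * aeval X q) (i j : ℕ) :
    q.coeff i * q.coeff j = if i = j then q.coeff i else 0 := by
  have hlhs : aeval (C X * X : A[X][X]) q =
      ∑ k ∈ range (q.natDegree + 1), C (monomial k (q.coeff k)) * X ^ k := by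
    rw [aeval_eq_sum_range]
    refine sum_congr rfl fun k _ => ?_
    simp [mul_pow, ← C_mul_X_pow_eq_monomial, Algebra.smul_def]
    ring
  have hrhs : aeval (C X) q * aeval X q = C q * q.map C := by
    rw [show (C X : A[X][X]) = algebraMap A[X] A[X][X] X from rfl, aeval_algebraMap_apply,
      aeval_X_left_apply]
    rfl
  have h := congrArg (fun p : A[X][X] => (p.coeff j).coeff i) hq
  simp only [hlhs, hrhs, finsetSum_coeff, coeff_C_mul_X_pow] at h
  simp only [coeff_C_mul, coeff_map, coeff_mul_C, apply_ite (coeff · i), coeff_zero, sum_ite_eq,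
    coeff_monomial, mem_range] at h
  rw [← h]
  split_ifs <;> grind [coeff_eq_zero_of_natDegree_lt]

section

variable {A : Type*} [CommRing A] {n : ℕ} {F : Matrix (Fin n) (Fin n) A} {r : Fin (n + 1) → A}

theorem sum_principal_minors_eq_sum_mul_choose
    (hr : (1 + (X : A[X]) • F.map C).det = ∑ i : Fin (n + 1), C (r i) * (1 + X) ^ (i : ℕ))
    (k : ℕ) :
    ∑ I ∈ powersetCard k (univ : Finset (Fin n)),
        (F.submatrix (Subtype.val : I → Fin n) Subtype.val).det =
      ∑ i : Fin (n + 1), r i * ((i : ℕ).choose k : A) := by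
  rw [← coeff_det_one_add_X_smul_eq_sum_minors, hr]
  simp [finsetSum_coeff, coeff_C_mul, coeff_one_add_X_pow]

theorem det_one_add_sub_one_smul_eq_aeval
    (hr : (1 + (X : A[X]) • F.map C).det = ∑ i : Fin (n + 1), C (r i) * (1 + X) ^ (i : ℕ))
    {B : Type*} [CommRing B] [Algebra A B] (u : B) :
    (1 + (u - 1) • F.map (algebraMap A B)).det =
      aeval u (∑ i : Fin (n + 1), C (r i) * X ^ (i : ℕ)) := by
  have h := congrArg (aeval (u - 1)) hr
  rw [AlgHom.map_det] at h
  convert h using 1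
  · congr 1
    ext i j
    simp [Matrix.one_apply, mul_comm (u - 1)]
  · simp only [map_sum, map_mul, map_pow, map_add, map_one, aeval_C, aeval_X, add_sub_cancel]

theorem mul_eq_ite_of_mul_self
    (hr : (1 + (X : A[X]) • F.map C).det = ∑ i : Fin (n + 1), C (r i) * (1 + X) ^ (i : ℕ))
    (hF : F * F = F) (i j : Fin (n + 1)) :
    r i * r j = if i = j then r i else 0 := by
  have hG : IsIdempotentElem (F.map (algebraMap A A[X][X])) := by
    rw [IsIdempotentElem, ← Matrix.map_mul, hF]
  have hq := (∑ i : Fin (n + 1), C (r i) * X ^ (i : ℕ)).coeff_mul_coeff_of_aeval_mul (by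
    simp only [← det_one_add_sub_one_smul_eq_aeval hr, ← det_mul, hG.one_add_sub_one_smul_mul])
  simpa [finsetSum_coeff, Fin.val_inj] using hq i j

end

/-- **Theorem 4 (partial).** Let `F` be an idempotent `n × n` matrix over a commutative
ring `A`, with `r 0, …, r n` defined by `det(I + X • F) = ∑ i, r i • (1 + X) ^ i`.
Then for each `k`, the sum over all `k`-element subsets `I` of `{1, …, n}` of
`r k` times the principal `k × k` minor of `F` indexed by `I` equals `r k`, i.e.
`r k * σ_k F = r k` where `σ_k F` is the sum of all principal `k × k` minors. -/
theorem idempotent_mul_sum_principal_minors_eq_self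
    {A : Type*} [CommRing A] {n : ℕ}
    (F : Matrix (Fin n) (Fin n) A) (hF : F * F = F)
    (r : Fin (n + 1) → A)
    (hr : (1 + (Polynomial.X : A[X]) • F.map Polynomial.C).det
        = ∑ i : Fin (n + 1), Polynomial.C (r i) * (1 + Polynomial.X) ^ (i : ℕ)) :
    ∀ k : Fin (n + 1),
      r k * ∑ I ∈ Finset.powersetCard (k : ℕ) (Finset.univ : Finset (Fin n)),
        (F.submatrix (fun i : {x // x ∈ I} => (i : Fin n))
          (fun i : {x // x ∈ I} => (i : Fin n))).det = r k := by
  intro k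
  rw [sum_principal_minors_eq_sum_mul_choose hr, mul_sum]
  simp_rw [← mul_assoc, mul_eq_ite_of_mul_self hr hF, ite_mul, zero_mul]
  simp
end

section
/- Let A be a commutative ring and M an A-module. Then M is a finitely generated projective A-module if and only if there exist finitely many elements s_1, …, s_m of A with s_1·A + ⋯ + s_m·A = A such that for each i the localized module M_{s_i} is a finite free module over the localization A_{s_i}. -/
/-! Over the local ring `A_p` a finite projective module is free, and a finitely presented
module that is free at `p` is already free after inverting a single `r ∉ p`. No maximal
ideal contains all the `r` so obtained, so finitely many of them generate the unit ideal.
Conversely, finite presentation is local on comaximal families, and a finitely presented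
module is projective as soon as it is projective on a cover of `Spec A` by basic opens. -/

open PrimeSpectrum

theorem Ideal.span_eq_top_of_forall_isMaximal_exists_notMem {A : Type*} [CommRing A]
    {t : Set A} (h : ∀ I : Ideal A, I.IsMaximal → ∃ r ∈ t, r ∉ I) : Ideal.span t = ⊤ := by
  by_contra ht
  obtain ⟨I, hI, htI⟩ := Ideal.exists_le_maximal _ ht
  obtain ⟨r, hrt, hrI⟩ := h I hI
  exact hrI (htI (Ideal.subset_span hrt))

theorem Ideal.exists_fin_range_subset_span_eq_top {A : Type*} [CommRing A] {t : Set A}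
    (ht : Ideal.span t = ⊤) :
    ∃ (m : ℕ) (s : Fin m → A), Set.range s ⊆ t ∧ Ideal.span (Set.range s) = ⊤ := by
  obtain ⟨t', ht't, ht'⟩ := (Ideal.span_eq_top_iff_finite t).mp ht
  obtain ⟨m, s, hs⟩ := t'.finite_toSet.fin_embedding
  exact ⟨m, s, hs ▸ ht't, hs ▸ ht'⟩

namespace Module

variable {A : Type*} [CommRing A] {M : Type*} [AddCommGroup M] [Module A M]

theorem exists_notMem_free_localizedModule_away [FinitePresentation A M] [Projective A M]
    (p : Ideal A) [p.IsPrime] :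
    ∃ r ∉ p, Free (Localization.Away r) (LocalizedModule.Away r M) := by
  have : Free (Localization.AtPrime p) (LocalizedModule p.primeCompl M) :=
    free_of_flat_of_isLocalRing
  obtain ⟨r, hr, hfree, -⟩ := FinitePresentation.exists_free_localizedModule_powers
    p.primeCompl (LocalizedModule.mkLinearMap p.primeCompl M) (Localization.AtPrime p)
  exact ⟨r, hr, hfree⟩

theorem exists_comaximal_free_localizedModule_away [FinitePresentation A M] [Projective A M] :
    ∃ (m : ℕ) (s : Fin m → A), Ideal.span (Set.range s) = ⊤ ∧
      ∀ i, Free (Localization.Away (s i)) (LocalizedModule.Away (s i) M) := by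
  have hspan : Ideal.span {r : A | Free (Localization.Away r) (LocalizedModule.Away r M)} = ⊤ :=
    Ideal.span_eq_top_of_forall_isMaximal_exists_notMem fun p _ ↦
      let ⟨r, hrp, hfree⟩ := exists_notMem_free_localizedModule_away (M := M) p
      ⟨r, hfree, hrp⟩
  obtain ⟨m, s, hsub, hs⟩ := Ideal.exists_fin_range_subset_span_eq_top hspan
  exact ⟨m, s, hs, fun i ↦ hsub ⟨i, rfl⟩⟩

theorem projective_of_localizationSpan [FinitePresentation A M] (t : Set A)
    (ht : Ideal.span t = ⊤)
    (h : ∀ r ∈ t, Projective (Localization.Away r) (LocalizedModule.Away r M)) :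
    Projective A M := by
  have hcover : (⨆ r ∈ t, basicOpen r) = ⊤ := iSup_basicOpen_eq_top_iff'.mpr ht
  refine freeLocus_eq_univ_iff.mp (Set.eq_univ_of_forall fun p ↦ ?_)
  obtain ⟨r, hrt, hp⟩ : ∃ r ∈ t, p ∈ basicOpen r := by
    simpa using (hcover.ge (TopologicalSpace.Opens.mem_top p))
  exact basicOpen_subset_freeLocus_iff.mpr (h r hrt) hp

end Module

/-- **Theorem 1.** A module `M` over a commutative ring `A` is finitely generated and
projective if and only if it is locally free: there exist finitely many comaximal
elements `s 1, …, s m` of `A` (generating the unit ideal) such that each localization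
`M_{s i}` is a finite free module over `A_{s i}`. -/
theorem finite_projective_iff_exists_comaximal_localizations_free
    {A : Type*} [CommRing A] (M : Type*) [AddCommGroup M] [Module A M] :
    (Module.Finite A M ∧ Module.Projective A M) ↔
      ∃ (m : ℕ) (s : Fin m → A),
        Ideal.span (Set.range s) = ⊤ ∧
        ∀ i : Fin m,
          Module.Finite (Localization (Submonoid.powers (s i)))
            (LocalizedModule (Submonoid.powers (s i)) M) ∧
          Module.Free (Localization (Submonoid.powers (s i)))
            (LocalizedModule (Submonoid.powers (s i)) M) := by
  constructor
  · rintro ⟨_, _⟩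
    have := Module.finitePresentation_of_projective A M
    obtain ⟨m, s, hs, hfree⟩ := Module.exists_comaximal_free_localizedModule_away (A := A) (M := M)
    exact ⟨m, s, hs, fun i ↦ ⟨inferInstance, hfree i⟩⟩
  · rintro ⟨m, s, hs, hloc⟩
    have : Module.FinitePresentation A M := by
      refine Module.FinitePresentation.of_localizationSpan _ hs fun ⟨_, i, rfl⟩ ↦ ?_
      obtain ⟨_, _⟩ := hloc i
      exact Module.finitePresentation_of_projective _ _
    refine ⟨inferInstance, Module.projective_of_localizationSpan _ hs ?_⟩
    rintro _ ⟨i, rfl⟩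
    have := (hloc i).2
    infer_instance
end

section
/- Let A be a commutative ring and M a finitely generated projective A-module generated by n elements. Then there exists a fundamental system of orthogonal idempotents r_0, r_1, …, r_n of A such that for each k with 0 ≤ k ≤ n and every prime ideal P of A with r_k ∉ P, the localization M_P is a free A_P-module of rank k. Moreover A is isomorphic as a ring to the product A_{r_0} × A_{r_1} × ⋯ × A_{r_n}, and M is isomorphic as an A-module to r_0·M ⊕ r_1·M ⊕ ⋯ ⊕ r_n·M. -/
/-!
Since `M` is finitely presented and flat, `p ↦ rank M_p` is a locally constant function on
`Spec A`, and it is bounded by `n` because `M_p` is spanned by the images of the `n`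
generators. Its fibres are therefore clopen, i.e. basic opens of idempotents `r k`; an
idempotent is determined by its basic open, so disjointness and covering of the fibres make
`(r k)` a complete orthogonal family. Such a family splits `A` into the product of the
`A/(1 - r k) ≅ A_{r k}` and `M` into the sum of the `r k • M`.
-/

open DirectSum

namespace PrimeSpectrum

variable {A : Type*} [CommRing A]

theorem exists_completeOrthogonalIdempotents_of_isLocallyConstant {ι : Type*} [Fintype ι]
    {f : PrimeSpectrum A → ι} (hf : IsLocallyConstant f) :
    ∃ e : ι → A, CompleteOrthogonalIdempotents e ∧ ∀ i p, f p = i ↔ e i ∉ p.asIdeal := by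
  choose e he hfiber using fun i ↦ exists_idempotent_basicOpen_eq_of_isClopen (hf.isClopen_fiber i)
  have hmem : ∀ i p, f p = i ↔ e i ∉ p.asIdeal := fun i p ↦ Set.ext_iff.mp (hfiber i) p
  have ortho : OrthogonalIdempotents e := by
    refine ⟨he, fun i j hij ↦
      basicOpen_injOn_isIdempotentElem ((he i).mul (he j)) IsIdempotentElem.zero ?_⟩
    rw [basicOpen_mul, basicOpen_zero, eq_bot_iff]
    rintro p ⟨hi, hj⟩
    exact hij (((hmem i p).mpr hi).symm.trans ((hmem j p).mpr hj))
  refine ⟨e, ⟨ortho, basicOpen_injOn_isIdempotentElem ortho.isIdempotentElem_sum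
    IsIdempotentElem.one ?_⟩, hmem⟩
  rw [basicOpen_one, eq_top_iff]
  intro p _ hsum
  refine (hmem (f p) p).mp rfl ?_
  rw [← ortho.mul_sum_of_mem (Finset.mem_univ (f p))]
  exact p.asIdeal.mul_mem_left _ hsum

end PrimeSpectrum

namespace Module

variable {A : Type*} [CommRing A] {M : Type*} [AddCommGroup M] [Module A M]

theorem rankAtStalk_le_of_span_eq_top {n : ℕ} {g : Fin n → M}
    (hg : Submodule.span A (Set.range g) = ⊤) (p : PrimeSpectrum A) :
    rankAtStalk M p ≤ n := by
  have hspan := span_eq_top_of_isLocalizedModule (Localization.AtPrime p.asIdeal)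
    p.asIdeal.primeCompl (LocalizedModule.mkLinearMap p.asIdeal.primeCompl M) hg
  rw [← Set.range_comp] at hspan
  simpa [rankAtStalk] using finrank_le_of_span_eq_top hspan

theorem nonempty_basis_of_rankAtStalk_eq [Module.Finite A M] [Module.Flat A M]
    {P : Ideal A} [hP : P.IsPrime] {k : ℕ} (h : rankAtStalk M ⟨P, hP⟩ = k) :
    Nonempty (Basis (Fin k) (Localization.AtPrime P) (LocalizedModule P.primeCompl M)) :=
  have : Module.Free (Localization.AtPrime P) (LocalizedModule P.primeCompl M) :=
    free_of_flat_of_isLocalRing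
  ⟨finBasisOfFinrankEq _ _ h⟩

end Module

namespace OrthogonalIdempotents

variable {A : Type*} [CommRing A] {ι : Type*} {e : ι → A}

lemma smul_coe_range_lsmul [DecidableEq ι] (he : OrthogonalIdempotents e) {M : Type*}
    [AddCommGroup M] [Module A M] (i j : ι) (x : LinearMap.range (LinearMap.lsmul A M (e j))) :
    e i • (x : M) = if i = j then (x : M) else 0 := by
  obtain ⟨_, m, rfl⟩ := x
  simp only [LinearMap.lsmul_apply, smul_smul, he.mul_eq]
  split_ifs with h <;> simp [h]

end OrthogonalIdempotents

namespace CompleteOrthogonalIdempotents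

variable {A : Type*} [CommRing A] {ι : Type*} [Fintype ι] {e : ι → A}

noncomputable def ringEquivPiLocalizationAway (he : CompleteOrthogonalIdempotents e) :
    A ≃+* Π i, Localization.Away (e i) :=
  (RingEquiv.ofBijective _ he.bijective_pi).trans <| RingEquiv.piCongrRight fun i ↦
    have := IsLocalization.Away.quotient_of_isIdempotentElem (he.idem i)
    (IsLocalization.algEquiv (.powers (e i)) _ _).toRingEquiv.symm

variable (M : Type*) [AddCommGroup M] [Module A M]

noncomputable def linearEquivPiRangeLsmul (he : CompleteOrthogonalIdempotents e) :
    M ≃ₗ[A] Π i, LinearMap.range (LinearMap.lsmul A M (e i)) where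
  toFun m i := (LinearMap.lsmul A M (e i)).rangeRestrict m
  map_add' _ _ := by ext; simp
  map_smul' _ _ := by ext; simp
  invFun x := ∑ i, (x i : M)
  left_inv m := by simp [← Finset.sum_smul, he.complete]
  right_inv x := by
    classical
    funext i
    ext
    simp [he.toOrthogonalIdempotents.smul_coe_range_lsmul]

end CompleteOrthogonalIdempotents

open Module PrimeSpectrum in
/-- **Theorem 2.** If `M` is a finitely generated projective module over a commutative
ring `A`, generated by `n` elements, then there is a fundamental system of orthogonal
idempotents `r 0, …, r n` of `A` such that for each `k`, the module `M` becomes free of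
rank `k` after localization at any prime avoiding `r k`; moreover `A` is isomorphic to
the product of the localizations `A_{r k}` and `M` to the direct sum of the
submodules `r k • M`. -/
theorem exists_fundamental_system_of_orthogonal_idempotents_rank_decomposition
    {A : Type*} [CommRing A] (M : Type*) [AddCommGroup M] [Module A M]
    [Module.Projective A M] {n : ℕ} (g : Fin n → M)
    (hg : Submodule.span A (Set.range g) = ⊤) :
    ∃ r : Fin (n + 1) → A,
      (∑ k : Fin (n + 1), r k) = 1 ∧
      (∀ k l : Fin (n + 1), k ≠ l → r k * r l = 0) ∧
      (∀ (k : Fin (n + 1)) (P : Ideal A) (hP : P.IsPrime), r k ∉ P →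
        Nonempty (Module.Basis (Fin (k : ℕ)) (Localization.AtPrime P)
          (LocalizedModule P.primeCompl M))) ∧
      Nonempty (A ≃+* ∀ k : Fin (n + 1), Localization (Submonoid.powers (r k))) ∧
      Nonempty (M ≃ₗ[A]
        ⨁ k : Fin (n + 1), LinearMap.range (LinearMap.lsmul A M (r k))) := by
  have : Module.Finite A M := ⟨hg ▸ Submodule.fg_span (Set.finite_range g)⟩
  have : Module.FinitePresentation A M := finitePresentation_of_projective A M
  let rank (p : PrimeSpectrum A) : Fin (n + 1) :=
    ⟨rankAtStalk M p, Nat.lt_succ_of_le (rankAtStalk_le_of_span_eq_top hg p)⟩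
  obtain ⟨r, hr, hrank⟩ := exists_completeOrthogonalIdempotents_of_isLocallyConstant
    (IsLocallyConstant.desc rank Fin.val isLocallyConstant_rankAtStalk Fin.val_injective)
  refine ⟨r, hr.complete, fun _ _ hkl ↦ hr.ortho hkl, fun k P hP hk ↦ ?_,
    ⟨hr.ringEquivPiLocalizationAway⟩,
    ⟨(hr.linearEquivPiRangeLsmul M).trans (linearEquivFunOnFintype A _ _).symm⟩⟩
  exact nonempty_basis_of_rankAtStalk_eq (congrArg Fin.val ((hrank k ⟨P, hP⟩).mpr hk))
end

section
/- Let A be a commutative ring and G a q×m matrix over A. Suppose G has a k×k submatrix whose determinant is invertible in A and that all (k+1)×(k+1) minors of G are zero. Then G is equivalent to the canonical matrix I_{k,q,m} (i.e., there exist an invertible q×q matrix P and an invertible m×m matrix Q over A with P·G·Q = I_{k,q,m}). Consequently the cokernel of G is a free A-module of rank q−k, the image of G is a free A-module of rank k admitting a free complement in A^q, and the kernel of G is a free A-module of rank m−k admitting a free complement in A^m. -/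
/-!
Permuting rows and columns puts the invertible minor `B` in the upper left corner, so that `G`
becomes a block matrix `[[B, C], [D, E]]`. The `(k+1)`-minor obtained by bordering `B` with row
`i` and column `j` equals `det B * (E - D B⁻¹ C) i j`, hence the Schur complement vanishes and
block row and column operations reduce `G` to `[[1, 0], [0, 0]]`. In the corresponding
coordinates `G` is `(x, y) ↦ (x, 0)` from `Aᵏ × Aᵐ⁻ᵏ` to `Aᵏ × A^(q-k)`, whose image, kernel and
their coordinate complements are free.
-/

open Matrix

/-- The canonical `q × m` matrix with the identity `I_k` in the upper left corner and
zeros elsewhere. -/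
def stdBlockMatrix {A : Type*} [CommRing A] (k q m : ℕ) : Matrix (Fin q) (Fin m) A :=
  Matrix.of fun i j => if (i : ℕ) = (j : ℕ) ∧ (i : ℕ) < k then 1 else 0

theorem Function.Injective.exists_sumEquiv_apply_inl {k n : ℕ} {f : Fin k → Fin n}
    (hf : Function.Injective f) : ∃ e : Fin k ⊕ Fin (n - k) ≃ Fin n, ∀ i, e (.inl i) = f i := by
  classical
  have hcard : Fintype.card ((Set.range f)ᶜ : Set (Fin n)) = n - k := by
    rw [Fintype.card_compl_set, Fintype.card_fin, Set.card_range_of_injective hf, Fintype.card_fin]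
  exact ⟨((Equiv.ofInjective f hf).sumCongr (Fintype.equivFinOfCardEq hcard).symm).trans
    (Equiv.Set.sumCompl _), fun i => by simp⟩

namespace LinearMap

variable {R M N X Y : Type*} [Ring R] [AddCommGroup M] [Module R M] [AddCommGroup N] [Module R N]
  [AddCommGroup X] [Module R X] [AddCommGroup Y] [Module R Y]

theorem isCompl_map_range_inl_map_range_inr (e : (X × Y) ≃ₗ[R] M) :
    IsCompl ((range (inl R X Y)).map e.toLinearMap) ((range (inr R X Y)).map e.toLinearMap) :=
  (Submodule.orderIsoMapComap e).isCompl isCompl_range_inl_inr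

theorem exists_isCompl_range_of_eq_comp_inl {f : M →ₗ[R] N} {g : M →ₗ[R] X} (e : (X × Y) ≃ₗ[R] N)
    (hg : Function.Surjective g) (hf : f = e.toLinearMap ∘ₗ inl R X Y ∘ₗ g) :
    Nonempty ((N ⧸ range f) ≃ₗ[R] Y) ∧ Nonempty (range f ≃ₗ[R] X) ∧
      ∃ N' : Submodule R N, IsCompl (range f) N' ∧ Nonempty (N' ≃ₗ[R] Y) := by
  have hrange : range f = (range (inl R X Y)).map e.toLinearMap := by
    rw [hf, ← comp_assoc, range_comp_of_range_eq_top _ (range_eq_top.mpr hg), range_comp]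
  refine ⟨⟨?_⟩, ⟨?_⟩, _, hrange ▸ isCompl_map_range_inl_map_range_inr e, ⟨?_⟩⟩
  · refine (Submodule.Quotient.equiv _ _ e.symm ?_).trans
      ((snd R X Y).quotKerEquivOfSurjective snd_surjective)
    rw [hrange, ker_snd, Submodule.map_symm_eq_iff]
  · exact (LinearEquiv.ofEq _ _ hrange).trans
      ((e.submoduleMap _).symm.trans (LinearEquiv.ofInjective _ inl_injective).symm)
  · exact ((LinearEquiv.ofInjective _ inr_injective).trans (e.submoduleMap _)).symm

theorem exists_isCompl_ker_of_eq_comp_fst {f : M →ₗ[R] N} {g : X →ₗ[R] N} (e : M ≃ₗ[R] (X × Y))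
    (hg : Function.Injective g) (hf : f = g ∘ₗ fst R X Y ∘ₗ e.toLinearMap) :
    Nonempty (ker f ≃ₗ[R] Y) ∧
      ∃ M' : Submodule R M, IsCompl (ker f) M' ∧ Nonempty (M' ≃ₗ[R] X) := by
  have hker : ker f = (range (inr R X Y)).map e.symm.toLinearMap := by
    rw [hf, ker_comp_of_ker_eq_bot _ (ker_eq_bot.mpr hg), ker_comp, ker_fst,
      Submodule.comap_equiv_eq_map_symm]
  refine ⟨⟨?_⟩, _, hker ▸ (isCompl_map_range_inl_map_range_inr e.symm).symm, ⟨?_⟩⟩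
  · exact (LinearEquiv.ofEq _ _ hker).trans
      ((e.symm.submoduleMap _).symm.trans (LinearEquiv.ofInjective _ inr_injective).symm)
  · exact ((LinearEquiv.ofInjective _ inl_injective).trans (e.symm.submoduleMap _)).symm

end LinearMap

namespace Matrix

variable {l m n A : Type*} [CommRing A]

section BlockMatrix

variable [Fintype l] [DecidableEq l]

theorem det_submatrix_sumMap_fin_one (M : Matrix (l ⊕ m) (l ⊕ n) A) [Invertible M.toBlocks₁₁]
    (i : m) (j : n) :
    (M.submatrix (Sum.map id fun _ : Fin 1 => i) (Sum.map id fun _ : Fin 1 => j)).det =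
      M.toBlocks₁₁.det * (M.toBlocks₂₂ - M.toBlocks₂₁ * ⅟M.toBlocks₁₁ * M.toBlocks₁₂) i j := by
  have hsub : M.submatrix (Sum.map id fun _ : Fin 1 => i) (Sum.map id fun _ : Fin 1 => j) =
      fromBlocks M.toBlocks₁₁ (M.toBlocks₁₂.submatrix id fun _ => j)
        (M.toBlocks₂₁.submatrix (fun _ => i) id)
        (M.toBlocks₂₂.submatrix (fun _ => i) fun _ => j) := by
    ext (a | a) (b | b) <;> rfl
  rw [hsub, det_fromBlocks₁₁, det_fin_one]
  simp [mul_apply]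

theorem toBlocks₂₂_eq_of_det_submatrix_sumMap_eq_zero (M : Matrix (l ⊕ m) (l ⊕ n) A)
    [Invertible M.toBlocks₁₁]
    (h : ∀ i j,
      (M.submatrix (Sum.map id fun _ : Fin 1 => i) (Sum.map id fun _ : Fin 1 => j)).det = 0) :
    M.toBlocks₂₂ = M.toBlocks₂₁ * ⅟M.toBlocks₁₁ * M.toBlocks₁₂ := by
  ext i j
  have := h i j
  rwa [det_submatrix_sumMap_fin_one, (isUnit_det_of_invertible _).mul_right_eq_zero, sub_apply,
    sub_eq_zero] at this

theorem mulVecLin_fromBlocks_one_zero [Fintype n] :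
    (fromBlocks (1 : Matrix l l A) 0 0 0 : Matrix (l ⊕ m) (l ⊕ n) A).mulVecLin =
      (LinearEquiv.sumArrowLequivProdArrow l m A A).symm.toLinearMap ∘ₗ
        LinearMap.inl A (l → A) (m → A) ∘ₗ LinearMap.fst A (l → A) (n → A) ∘ₗ
          (LinearEquiv.sumArrowLequivProdArrow l n A A).toLinearMap := by
  refine LinearMap.ext fun x => funext fun i => ?_
  rcases i with i | i <;> simp [fromBlocks_mulVec]

end BlockMatrix

section Equivalence

variable [Fintype m] [DecidableEq m] [Fintype n] [DecidableEq n]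

def IsEquivalent (M N : Matrix m n A) : Prop :=
  ∃ (P : Matrix m m A) (Q : Matrix n n A), IsUnit P.det ∧ IsUnit Q.det ∧ P * M * Q = N

theorem isUnit_det_submatrix_equiv {m' : Type*} [Fintype m'] [DecidableEq m']
    {P : Matrix m m A} (hP : IsUnit P.det) (e₁ e₂ : m' ≃ m) :
    IsUnit (P.submatrix e₁ e₂).det := by
  have := P.invertibleOfIsUnitDet hP
  refine isUnit_det_of_right_inverse (B := (⅟P).submatrix e₂ e₁) ?_
  rw [submatrix_mul_equiv, mul_invOf_self, submatrix_one_equiv]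

theorem IsEquivalent.submatrix {m' n' : Type*} [Fintype m'] [DecidableEq m'] [Fintype n']
    [DecidableEq n'] {M N : Matrix m n A} (h : M.IsEquivalent N)
    (e₁ e₁' : m' ≃ m) (e₂ e₂' : n' ≃ n) :
    (M.submatrix e₁ e₂).IsEquivalent (N.submatrix e₁' e₂') := by
  obtain ⟨P, Q, hP, hQ, rfl⟩ := h
  exact ⟨P.submatrix e₁' e₁, Q.submatrix e₂ e₂', isUnit_det_submatrix_equiv hP _ _,
    isUnit_det_submatrix_equiv hQ _ _, by simp only [submatrix_mul_equiv]⟩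

theorem IsEquivalent.exists_mulVecLin_eq {M N : Matrix m n A} (h : M.IsEquivalent N) :
    ∃ (e₁ : (n → A) ≃ₗ[A] (n → A)) (e₂ : (m → A) ≃ₗ[A] (m → A)),
      M.mulVecLin = e₂.toLinearMap ∘ₗ N.mulVecLin ∘ₗ e₁.toLinearMap := by
  obtain ⟨P, Q, hP, hQ, hPMQ⟩ := h
  have := P.invertibleOfIsUnitDet hP
  have := Q.invertibleOfIsUnitDet hQ
  refine ⟨(⅟Q).toLinearEquiv' invertibleInvOf, (⅟P).toLinearEquiv' invertibleInvOf, ?_⟩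
  have hM : M = ⅟P * N * ⅟Q := by
    rw [← hPMQ]; simp [Matrix.mul_assoc]
  rw [toLinearEquiv'_apply, toLinearEquiv'_apply, hM, mulVecLin_mul, mulVecLin_mul]
  rfl

theorem IsEquivalent.exists_mulVecLin_eq_comp_inl_fst {m' n' : Type*} [Fintype l] [DecidableEq l]
    [Fintype n'] {M : Matrix m n A} {e₁ : l ⊕ m' ≃ m} {e₂ : l ⊕ n' ≃ n}
    (h : M.IsEquivalent (reindex e₁ e₂ (fromBlocks 1 0 0 0))) :
    ∃ (f₁ : (n → A) ≃ₗ[A] ((l → A) × (n' → A))) (f₂ : ((l → A) × (m' → A)) ≃ₗ[A] (m → A)),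
      M.mulVecLin = f₂.toLinearMap ∘ₗ LinearMap.inl A (l → A) (m' → A) ∘ₗ
        LinearMap.fst A (l → A) (n' → A) ∘ₗ f₁.toLinearMap := by
  obtain ⟨f₁, f₂, hM⟩ := h.exists_mulVecLin_eq
  refine ⟨f₁ ≪≫ₗ LinearEquiv.funCongrLeft A A e₂ ≪≫ₗ LinearEquiv.sumArrowLequivProdArrow l n' A A,
    (LinearEquiv.sumArrowLequivProdArrow l m' A A).symm ≪≫ₗ
      LinearEquiv.funCongrLeft A A e₁.symm ≪≫ₗ f₂, ?_⟩
  rw [hM, mulVecLin_reindex, mulVecLin_fromBlocks_one_zero]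
  rfl

theorem isEquivalent_fromBlocks_one_zero [Fintype l] [DecidableEq l] (B : Matrix l l A)
    (C : Matrix l n A) (D : Matrix m l A) [Invertible B] :
    (fromBlocks B C D (D * ⅟B * C)).IsEquivalent (fromBlocks 1 0 0 0) := by
  refine ⟨fromBlocks (⅟B) 0 (-(D * ⅟B)) 1, fromBlocks 1 (-(⅟B * C)) 0 1, ?_, ?_, ?_⟩
  · simpa using isUnit_det_of_invertible B
  · simp
  · simp [fromBlocks_multiply, Matrix.mul_assoc]

end Equivalence

end Matrix

def finSumFinSubEquiv {k n : ℕ} (h : k ≤ n) : Fin k ⊕ Fin (n - k) ≃ Fin n :=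
  finSumFinEquiv.trans (finCongr (Nat.add_sub_cancel' h))

theorem stdBlockMatrix_eq_reindex {A : Type*} [CommRing A] {k q m : ℕ} (hq : k ≤ q) (hm : k ≤ m) :
    stdBlockMatrix k q m =
      reindex (finSumFinSubEquiv hq) (finSumFinSubEquiv hm)
        (fromBlocks (1 : Matrix _ _ A) 0 0 0) := by
  ext i j
  obtain ⟨a | a, rfl⟩ := (finSumFinSubEquiv hq).surjective i <;>
    obtain ⟨b | b, rfl⟩ := (finSumFinSubEquiv hm).surjective j <;>
    simp [stdBlockMatrix, finSumFinSubEquiv, one_apply, Fin.ext_iff]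
  omega

theorem Matrix.isEquivalent_stdBlockMatrix_of_isUnit_det_submatrix {A : Type*} [CommRing A]
    {q m k : ℕ} (G : Matrix (Fin q) (Fin m) A) {ri : Fin k → Fin q} {ci : Fin k → Fin m}
    (hri : Function.Injective ri) (hci : Function.Injective ci)
    (hunit : IsUnit (G.submatrix ri ci).det)
    (hminors : ∀ (ri' : Fin (k + 1) → Fin q) (ci' : Fin (k + 1) → Fin m),
      Function.Injective ri' → Function.Injective ci' → (G.submatrix ri' ci').det = 0) :
    G.IsEquivalent (stdBlockMatrix k q m) := by
  classical
  obtain ⟨eQ, heQ⟩ := hri.exists_sumEquiv_apply_inl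
  obtain ⟨eM, heM⟩ := hci.exists_sumEquiv_apply_inl
  set M := G.submatrix eQ eM
  have hB : M.toBlocks₁₁ = G.submatrix ri ci := by ext; simp [M, toBlocks₁₁, heQ, heM]
  have := M.toBlocks₁₁.invertibleOfIsUnitDet (hB ▸ hunit)
  have hSchur : M.toBlocks₂₂ = M.toBlocks₂₁ * ⅟M.toBlocks₁₁ * M.toBlocks₁₂ := by
    refine M.toBlocks₂₂_eq_of_det_submatrix_sumMap_eq_zero fun i j => ?_
    have hbord {β γ : Type} (e : Fin k ⊕ β ≃ γ) (i : β) :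
        Function.Injective (e ∘ Sum.map id fun _ : Fin 1 => i) :=
      e.injective.comp (Sum.map_injective.mpr
        ⟨Function.injective_id, Function.injective_of_subsingleton _⟩)
    have := hminors _ _ ((hbord eQ i).comp finSumFinEquiv.symm.injective)
      ((hbord eM j).comp finSumFinEquiv.symm.injective)
    rwa [← submatrix_submatrix, det_submatrix_equiv_self] at this
  have hM : M.IsEquivalent (fromBlocks 1 0 0 0) := by
    rw [← fromBlocks_toBlocks M, hSchur]
    exact isEquivalent_fromBlocks_one_zero _ _ _
  rw [stdBlockMatrix_eq_reindex (Fin.le_of_injective ri hri) (Fin.le_of_injective ci hci)]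
  simpa [M] using hM.submatrix eQ.symm _ eM.symm _

/-- **Freeness lemma.** If a `q × m` matrix `G` over a commutative ring `A` has an
invertible `k × k` minor while all its `(k+1) × (k+1)` minors vanish, then `G` is
equivalent to the canonical matrix `I_{k,q,m}`; consequently its cokernel is free of
rank `q - k`, its image is free of rank `k` with a free complement in `A^q`, and its
kernel is free of rank `m - k` with a free complement in `A^m`. -/
theorem matrix_equiv_stdBlockMatrix_of_isUnit_minor_of_minors_eq_zero
    {A : Type*} [CommRing A] {q m k : ℕ} (G : Matrix (Fin q) (Fin m) A)
    (ri : Fin k → Fin q) (ci : Fin k → Fin m)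
    (hri : Function.Injective ri) (hci : Function.Injective ci)
    (hunit : IsUnit (G.submatrix ri ci).det)
    (hminors : ∀ (ri' : Fin (k + 1) → Fin q) (ci' : Fin (k + 1) → Fin m),
      Function.Injective ri' → Function.Injective ci' →
      (G.submatrix ri' ci').det = 0) :
    (∃ (P : Matrix (Fin q) (Fin q) A) (Q : Matrix (Fin m) (Fin m) A),
        IsUnit P.det ∧ IsUnit Q.det ∧ P * G * Q = stdBlockMatrix k q m) ∧
    Nonempty (Module.Basis (Fin (q - k)) A ((Fin q → A) ⧸ LinearMap.range G.mulVecLin)) ∧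
    (Nonempty (Module.Basis (Fin k) A (LinearMap.range G.mulVecLin)) ∧
      ∃ N : Submodule A (Fin q → A),
        IsCompl (LinearMap.range G.mulVecLin) N ∧ Module.Free A N) ∧
    (Nonempty (Module.Basis (Fin (m - k)) A (LinearMap.ker G.mulVecLin)) ∧
      ∃ N : Submodule A (Fin m → A),
        IsCompl (LinearMap.ker G.mulVecLin) N ∧ Module.Free A N) := by
  have hG := G.isEquivalent_stdBlockMatrix_of_isUnit_det_submatrix hri hci hunit hminors
  refine ⟨hG, ?_⟩
  rw [stdBlockMatrix_eq_reindex (Fin.le_of_injective ri hri) (Fin.le_of_injective ci hci)] at hG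
  obtain ⟨e₁, e₂, hf⟩ := hG.exists_mulVecLin_eq_comp_inl_fst
  obtain ⟨⟨eCoker⟩, ⟨eRange⟩, N, hN, ⟨eN⟩⟩ := LinearMap.exists_isCompl_range_of_eq_comp_inl e₂
    ((LinearMap.fst_surjective (R := A)).comp e₁.surjective) hf
  obtain ⟨⟨eKer⟩, N', hN', ⟨eN'⟩⟩ := LinearMap.exists_isCompl_ker_of_eq_comp_fst e₁
    (g := e₂.toLinearMap ∘ₗ LinearMap.inl A _ _) (e₂.injective.comp LinearMap.inl_injective) hf
  exact ⟨⟨(Pi.basisFun A _).map eCoker.symm⟩,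
    ⟨⟨(Pi.basisFun A _).map eRange.symm⟩, N, hN, .of_equiv eN.symm⟩,
    ⟨(Pi.basisFun A _).map eKer.symm⟩, N', hN', .of_equiv eN'.symm⟩
end

section
/- Let A be a commutative local ring and F an n×n matrix over A with F² = F. Then there exist an integer k with 0 ≤ k ≤ n and an invertible n×n matrix P over A such that P·F·P⁻¹ = I_{k,n,n}, the standard projection matrix with the identity I_k in the upper left corner and zeros elsewhere. Equivalently, every finitely generated projective module over a commutative local ring is free. -/
/-!
An idempotent `F` splits `Aⁿ` as `range F ⊕ ker F`. Both summands are finitely generated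
projective, hence free over the local ring `A` (finitely presented flat modules over a local ring
are free). Concatenating bases of the two summands gives a basis of `Aⁿ` in which `F` acts as
`diag(I_k, 0)`, and the change-of-basis matrix conjugates `F` to `I_{k,n,n}`.
-/

open Matrix

universe v

/-- The standard `n × n` projection matrix `I_{k,n,n} = diag(I_k, 0)`. -/
def stdProjMatrix {A : Type*} [CommRing A] (k n : ℕ) : Matrix (Fin n) (Fin n) A :=
  Matrix.of fun i j => if (i : ℕ) = (j : ℕ) ∧ (i : ℕ) < k then 1 else 0

open Module

section

variable {A M : Type*} [CommRing A] [AddCommGroup M] [Module A M]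

theorem Module.free_of_finite_of_projective_of_isLocalRing [IsLocalRing A] [Module.Finite A M]
    [Projective A M] : Free A M :=
  have := finitePresentation_of_projective A M
  free_of_flat_of_isLocalRing

namespace Submodule

variable {p q : Submodule A M}

theorem finite_of_isCompl [Module.Finite A M] (h : IsCompl p q) : Module.Finite A p :=
  .of_surjective _ (projectionOnto_surjective h)

theorem projective_of_isCompl [Projective A M] (h : IsCompl p q) : Projective A p :=
  .of_split p.subtype (p.projectionOnto q h) (LinearMap.ext (projectionOnto_apply_left h))

theorem exists_basis_of_isCompl [IsLocalRing A] [Module.Finite A M] [Projective A M]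
    (h : IsCompl p q) : ∃ (k m : ℕ) (b : Basis (Fin (k + m)) A M),
      (∀ i, b (Fin.castAdd m i) ∈ p) ∧ ∀ j, b (Fin.natAdd k j) ∈ q := by
  have := finite_of_isCompl h
  have := projective_of_isCompl h
  have := finite_of_isCompl h.symm
  have := projective_of_isCompl h.symm
  have : Free A p := free_of_finite_of_projective_of_isLocalRing
  have : Free A q := free_of_finite_of_projective_of_isLocalRing
  exact ⟨_, _, (((finBasis A p).prod (finBasis A q)).map (prodEquivOfIsCompl p q h)).reindex
    finSumFinEquiv, fun i => by simp, fun j => by simp⟩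

end Submodule

theorem LinearMap.toMatrix_eq_stdProjMatrix {k m : ℕ} (b : Basis (Fin (k + m)) A M)
    {f : Module.End A M} (hl : ∀ i, f (b (Fin.castAdd m i)) = b (Fin.castAdd m i))
    (hr : ∀ j, f (b (Fin.natAdd k j)) = 0) :
    toMatrix b b f = stdProjMatrix k (k + m) := by
  ext i j
  induction j using Fin.addCases with
  | left j =>
    simp only [toMatrix_apply, hl, Basis.repr_self, Finsupp.single_apply, eq_comm, Fin.ext_iff,
      Fin.val_castAdd, stdProjMatrix, of_apply]
    grind
  | right j =>
    simp only [toMatrix_apply, hr, map_zero, Finsupp.coe_zero, Pi.zero_apply, stdProjMatrix,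
      of_apply, Fin.val_natAdd, right_eq_ite_iff, and_imp]
    omega

theorem LinearMap.IsIdempotentElem.exists_toMatrix_eq_stdProjMatrix [IsLocalRing A]
    [Module.Finite A M] [Projective A M] {f : Module.End A M} (hf : IsIdempotentElem f) :
    ∃ (k m : ℕ) (b : Basis (Fin (k + m)) A M), toMatrix b b f = stdProjMatrix k (k + m) := by
  obtain ⟨k, m, b, hp, hq⟩ := Submodule.exists_basis_of_isCompl (IsIdempotentElem.isCompl hf)
  exact ⟨k, m, b, toMatrix_eq_stdProjMatrix b (fun i => (mem_range_iff hf).1 (hp i)) hq⟩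

end

theorem Module.Basis.toMatrix_basisFun_mul_mul_inv {ι A : Type*} [CommRing A] [Fintype ι]
    [DecidableEq ι] (b : Basis ι A (ι → A)) (F : Matrix ι ι A) :
    b.toMatrix (Pi.basisFun A ι) * F * (b.toMatrix (Pi.basisFun A ι))⁻¹ =
      LinearMap.toMatrix b b (toLin' F) := by
  conv_lhs => rw [inv_eq_right_inv (b.toMatrix_mul_toMatrix_flip _),
    ← LinearMap.toMatrix'_toLin' F, ← LinearMap.toMatrix_eq_toMatrix']
  exact basis_toMatrix_mul_linearMap_toMatrix_mul_basis_toMatrix _ _ _ _ _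

/-- **Local freeness lemma.** Over a commutative local ring `A`, every idempotent
`n × n` matrix is similar to a standard projection matrix `I_{k,n,n}`; equivalently,
every finitely generated projective module over a commutative local ring is free. -/
theorem idempotent_matrix_similar_stdProj_of_isLocalRing
    {A : Type*} [CommRing A] [IsLocalRing A] {n : ℕ}
    (F : Matrix (Fin n) (Fin n) A) (hF : F * F = F) :
    (∃ k ≤ n, ∃ P : Matrix (Fin n) (Fin n) A,
        IsUnit P.det ∧ P * F * P⁻¹ = stdProjMatrix k n) ∧
    ∀ (M : Type v) [AddCommGroup M] [Module A M],
      Module.Finite A M → Module.Projective A M → Module.Free A M := by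
  refine ⟨?_, fun M _ _ _ _ => free_of_finite_of_projective_of_isLocalRing⟩
  have hf : IsIdempotentElem (toLin' F) := by
    rw [IsIdempotentElem, Module.End.mul_eq_comp, ← toLin'_mul, hF]
  obtain ⟨k, m, b, hb⟩ := LinearMap.IsIdempotentElem.exists_toMatrix_eq_stdProjMatrix hf
  obtain rfl : k + m = n := by simpa using (finrank_eq_card_basis b).symm
  exact ⟨k, k.le_add_right m, b.toMatrix (Pi.basisFun A _),
    isUnit_det_of_right_inverse (b.toMatrix_mul_toMatrix_flip _),
    by rw [b.toMatrix_basisFun_mul_mul_inv, hb]⟩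
end

section
/- Let A be a commutative ring, F₁ an m×m matrix over A with F₁² = F₁, and F₂ an n×n matrix over A with F₂² = F₂. If the image of F₁ in A^m and the image of F₂ in A^n are isomorphic as A-modules, then X^n·det(X·I_m − F₁) = X^m·det(X·I_n − F₂) in A[X]. -/
/-!
Writing `Aᵐ = R₁ ⊕ K₁` and `Aⁿ = R₂ ⊕ K₂` with `Rᵢ` the range and `Kᵢ` the kernel of `Fᵢ`,
the endomorphisms `F₁ ⊕ 0` and `0 ⊕ F₂` of `Aᵐ ⊕ Aⁿ` are the projections of
`R₁ ⊕ K₁ ⊕ R₂ ⊕ K₂` onto the first and onto the third summand. An isomorphism `R₁ ≃ R₂`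
swapping these two summands conjugates one into the other, so the two have the same
characteristic polynomial, which is `charpoly F₁ * Xⁿ` on one side and `Xᵐ * charpoly F₂` on
the other.
-/

open Matrix Polynomial

namespace LinearEquiv

variable {R : Type*} [CommSemiring R] {M₁ M₂ N₁ N₂ : Type*}
  [AddCommMonoid M₁] [Module R M₁] [AddCommMonoid M₂] [Module R M₂]
  [AddCommMonoid N₁] [Module R N₁] [AddCommMonoid N₂] [Module R N₂]

theorem conj_prodMap (e₁ : M₁ ≃ₗ[R] N₁) (e₂ : M₂ ≃ₗ[R] N₂) (f : Module.End R M₁)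
    (g : Module.End R M₂) :
    (e₁.prodCongr e₂).conj (f.prodMap g) = (e₁.conj f).prodMap (e₂.conj g) := by
  ext <;> simp [conj_apply, prodCongr_symm]

end LinearEquiv

namespace LinearMap

theorem exists_conj_prodMap_id_zero_eq {R : Type*} [CommSemiring R] {P K Q L : Type*}
    [AddCommMonoid P] [Module R P] [AddCommMonoid K] [Module R K]
    [AddCommMonoid Q] [Module R Q] [AddCommMonoid L] [Module R L] (e : P ≃ₗ[R] Q) :
    ∃ σ : ((P × K) × (Q × L)) ≃ₗ[R] ((P × K) × (Q × L)),
      σ.conj (((id : Module.End R P).prodMap (0 : Module.End R K)).prodMap 0)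
        = (0 : Module.End R (P × K)).prodMap ((id : Module.End R Q).prodMap 0) := by
  -- `σ ((a, b), (c, d)) = ((e.symm c, b), (e a, d))`
  let swap : (P × Q) ≃ₗ[R] (P × Q) := (LinearEquiv.prodComm R P Q).trans (e.symm.prodCongr e)
  refine ⟨(LinearEquiv.prodProdProdComm R P K Q L).trans
    ((swap.prodCongr (LinearEquiv.refl R (K × L))).trans
      (LinearEquiv.prodProdProdComm R P K Q L).symm), ?_⟩
  refine LinearMap.ext fun _ ↦ ?_
  simp [swap, LinearEquiv.conj_apply, LinearEquiv.prodCongr_symm]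

variable {R M N : Type*} [CommRing R] [AddCommGroup M] [Module R M] [AddCommGroup N] [Module R N]

theorem IsProj.exists_conj_prodMap_zero_eq {p : Submodule R M} {q : Submodule R N}
    {f : Module.End R M} {g : Module.End R N} (hf : IsProj p f) (hg : IsProj q g)
    (e : p ≃ₗ[R] q) :
    ∃ σ : (M × N) ≃ₗ[R] (M × N), σ.conj (f.prodMap 0) = (0 : Module.End R M).prodMap g := by
  let d := (p.prodEquivOfIsCompl _ hf.isCompl).prodCongr (q.prodEquivOfIsCompl _ hg.isCompl)
  have hd₁ : f.prodMap 0 = d.conj ((prodMap id 0).prodMap 0) := by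
    rw [LinearEquiv.conj_prodMap, map_zero, ← hf.eq_conj_prodMap]
  have hd₂ : (0 : Module.End R M).prodMap g = d.conj (prodMap 0 (prodMap id 0)) := by
    rw [LinearEquiv.conj_prodMap, map_zero, ← hg.eq_conj_prodMap]
  obtain ⟨σ, hσ⟩ := exists_conj_prodMap_id_zero_eq (K := ker f) (L := ker g) e
  refine ⟨d.symm.trans (σ.trans d), ?_⟩
  rw [hd₁, hd₂, ← hσ, ← LinearEquiv.conj_trans, ← LinearEquiv.conj_trans]
  simp

end LinearMap

theorem Matrix.isProj_range_mulVecLin {R : Type*} [CommSemiring R] {n : Type*} [Fintype n]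
    {F : Matrix n n R} (hF : F * F = F) :
    LinearMap.IsProj (LinearMap.range F.mulVecLin) F.mulVecLin := by
  refine LinearMap.IsIdempotentElem.isProj_range _ ?_
  rw [IsIdempotentElem, Module.End.mul_eq_comp, ← Matrix.mulVecLin_mul, hF]

/-- **Lemma 1.3.** If `F₁` (of size `m × m`) and `F₂` (of size `n × n`) are idempotent
matrices over a commutative ring `A` with isomorphic images, then
`X ^ n * charpoly F₁ = X ^ m * charpoly F₂`. -/
theorem charpoly_mul_X_pow_eq_of_linearEquiv_range
    {A : Type*} [CommRing A] {m n : ℕ}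
    (F₁ : Matrix (Fin m) (Fin m) A) (hF₁ : F₁ * F₁ = F₁)
    (F₂ : Matrix (Fin n) (Fin n) A) (hF₂ : F₂ * F₂ = F₂)
    (h : Nonempty (LinearMap.range F₁.mulVecLin ≃ₗ[A] LinearMap.range F₂.mulVecLin)) :
    (Polynomial.X : A[X]) ^ n * F₁.charpoly
      = (Polynomial.X : A[X]) ^ m * F₂.charpoly := by
  -- over a nontrivial ring `charpoly 0` is `X ^ finrank` (a rank condition is needed)
  nontriviality A
  obtain ⟨e⟩ := h
  obtain ⟨σ, hσ⟩ :=
    (isProj_range_mulVecLin hF₁).exists_conj_prodMap_zero_eq (isProj_range_mulVecLin hF₂) e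
  have hchar := congrArg LinearMap.charpoly hσ
  rw [LinearEquiv.charpoly_conj, LinearMap.charpoly_prodMap, LinearMap.charpoly_prodMap,
    LinearMap.charpoly_zero, LinearMap.charpoly_zero, charpoly_mulVecLin, charpoly_mulVecLin,
    Module.finrank_fin_fun, Module.finrank_fin_fun] at hchar
  rwa [mul_comm]
end

section
/- Let A be a commutative ring, s_1, …, s_n ∈ A with s_1·A + ⋯ + s_n·A = A, and M an A-module. Then: (1) M is finitely generated if and only if each M_{s_i} is a finitely generated A_{s_i}-module; (2) M is finitely presented if and only if each M_{s_i} is a finitely presented A_{s_i}-module; (3) M is a finitely generated projective A-module if and only if each M_{s_i} is a finitely generated projective A_{s_i}-module. -/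
/-!
Finite generation and finite presentation descend from the localizations at a comaximal family
by the local-global principles for `Module.Finite` and `Module.FinitePresentation`. For
projectivity, a finitely generated projective `A_{s_i}`-module is finitely presented and flat;
flatness over `A_{s_i}` is flatness over `A`, both properties descend, and a finitely presented
flat module is projective.
-/

namespace Module

variable {A : Type*} [CommRing A] {ι : Type*} {s : ι → A} (hs : Ideal.span (Set.range s) = ⊤)
  {M : Type*} [AddCommGroup M] [Module A M]
include hs

theorem finite_iff_forall_localizedModule_away :
    Module.Finite A M ↔
      ∀ i, Module.Finite (Localization.Away (s i)) (LocalizedModule.Away (s i) M) :=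
  ⟨fun _ _ ↦ inferInstance, fun h ↦
    Finite.of_localizationSpan (Set.range s) hs (by rintro ⟨_, i, rfl⟩; exact h i)⟩

theorem finitePresentation_iff_forall_localizedModule_away :
    FinitePresentation A M ↔
      ∀ i, FinitePresentation (Localization.Away (s i)) (LocalizedModule.Away (s i) M) :=
  ⟨fun _ _ ↦ inferInstance, fun h ↦
    FinitePresentation.of_localizationSpan (Set.range s) hs (by rintro ⟨_, i, rfl⟩; exact h i)⟩

theorem flat_of_forall_localizedModule_away
    (h : ∀ i, Flat (Localization.Away (s i)) (LocalizedModule.Away (s i) M)) : Flat A M := by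
  refine flat_of_localized_span A M (Set.range s) hs ?_
  rintro ⟨_, i, rfl⟩
  exact (flat_iff_of_isLocalization (Localization.Away (s i)) (Submonoid.powers (s i)) _).mp (h i)

theorem finite_projective_iff_forall_localizedModule_away :
    (Module.Finite A M ∧ Projective A M) ↔ ∀ i,
      Module.Finite (Localization.Away (s i)) (LocalizedModule.Away (s i) M) ∧
        Projective (Localization.Away (s i)) (LocalizedModule.Away (s i) M) := by
  refine ⟨fun ⟨_, _⟩ i ↦ ⟨inferInstance, projective_of_isLocalizedModule (Submonoid.powers (s i))
    (LocalizedModule.mkLinearMap _ M)⟩, fun h ↦ ?_⟩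
  have : FinitePresentation A M := (finitePresentation_iff_forall_localizedModule_away hs).mpr
    fun i ↦ have := (h i).1; have := (h i).2; finitePresentation_of_projective _ _
  have : Flat A M := flat_of_forall_localizedModule_away hs fun i ↦ have := (h i).2; inferInstance
  exact ⟨inferInstance, Flat.projective_of_finitePresentation⟩

end Module

/-- **Concrete local-global principle 1.23.** Let `s 1, …, s n` be comaximal elements of
a commutative ring `A` and `M` an `A`-module.  Then `M` is finitely generated
(resp. finitely presented, resp. finitely generated projective) iff each localization
`M_{s i}` is a finitely generated (resp. finitely presented, resp. finitely generated
projective) module over `A_{s i}`. -/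
theorem localGlobal_concrete_finite_finitePresentation_projective
    {A : Type*} [CommRing A] {n : ℕ} (s : Fin n → A)
    (hs : Ideal.span (Set.range s) = ⊤)
    (M : Type*) [AddCommGroup M] [Module A M] :
    (Module.Finite A M ↔ ∀ i : Fin n,
        Module.Finite (Localization (Submonoid.powers (s i)))
          (LocalizedModule (Submonoid.powers (s i)) M)) ∧
    (Module.FinitePresentation A M ↔ ∀ i : Fin n,
        Module.FinitePresentation (Localization (Submonoid.powers (s i)))
          (LocalizedModule (Submonoid.powers (s i)) M)) ∧
    ((Module.Finite A M ∧ Module.Projective A M) ↔ ∀ i : Fin n,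
        Module.Finite (Localization (Submonoid.powers (s i)))
          (LocalizedModule (Submonoid.powers (s i)) M) ∧
        Module.Projective (Localization (Submonoid.powers (s i)))
          (LocalizedModule (Submonoid.powers (s i)) M)) :=
  ⟨Module.finite_iff_forall_localizedModule_away hs,
    Module.finitePresentation_iff_forall_localizedModule_away hs,
    Module.finite_projective_iff_forall_localizedModule_away hs⟩
end

section
/- Let A be a commutative ring and M a finitely presented A-module. Then M is a finitely generated projective A-module if and only if for every prime ideal P of A the localization M_P is a free A_P-module. -/
/-- **Abstract local-global principle 1.25.** A finitely presented module `M` over a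
commutative ring `A` is finitely generated projective if and only if its localization
`M_P` is a free `A_P`-module for every prime ideal `P` of `A`. -/
theorem finitePresentation_projective_iff_localizations_free
    {A : Type*} [CommRing A] (M : Type*) [AddCommGroup M] [Module A M]
    (hM : Module.FinitePresentation A M) :
    (Module.Finite A M ∧ Module.Projective A M) ↔
      ∀ (P : Ideal A) (hP : P.IsPrime),
        Module.Free (Localization.AtPrime P) (LocalizedModule P.primeCompl M) := by
  have := hM
  rw [and_iff_right (inferInstanceAs (Module.Finite A M)), ← Module.freeLocus_eq_univ_iff,
    Set.eq_univ_iff_forall]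
  -- `x ∈ freeLocus A M` unfolds to freeness of `M` localized at `x.asIdeal`.
  exact ⟨fun h P hP ↦ h ⟨P, hP⟩, fun h x ↦ h x.asIdeal x.isPrime⟩
end

section
/- Let A be a commutative ring, s_1, …, s_n ∈ A with s_1·A + ⋯ + s_n·A = A, and let f : M → N and g : N → P be A-linear maps between A-modules. Then the sequence M → N → P (with maps f and g) is exact at N if and only if for each i the localized sequence M_{s_i} → N_{s_i} → P_{s_i} (with maps f_{s_i} and g_{s_i}) is exact at N_{s_i}. -/
/-- **Concrete local-global principle 1.26.** Let `s 1, …, s n` be comaximal elements of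
a commutative ring `A`.  A sequence `M → N → P` of `A`-linear maps is exact at `N`
if and only if each localized sequence `M_{s i} → N_{s i} → P_{s i}` is exact. -/
theorem localGlobal_concrete_exact_iff
    {A : Type*} [CommRing A] {n : ℕ} (s : Fin n → A)
    (hs : Ideal.span (Set.range s) = ⊤)
    {M N P : Type*} [AddCommGroup M] [Module A M] [AddCommGroup N] [Module A N]
    [AddCommGroup P] [Module A P] (f : M →ₗ[A] N) (g : N →ₗ[A] P) :
    Function.Exact f g ↔
      ∀ i : Fin n,
        Function.Exact (LocalizedModule.map (Submonoid.powers (s i)) f)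
          (LocalizedModule.map (Submonoid.powers (s i)) g) := by
  refine ⟨fun h i ↦ LocalizedModule.map_exact _ f g h, fun h ↦ ?_⟩
  refine exact_of_localized_span (Set.range s) hs f g ?_
  rintro ⟨_, i, rfl⟩
  exact h i
end
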